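/- arXiv:1707.06416 — 2 statements merged into one kernel-verified Lean document; each statement's English description precedes it below -/
import Mathlib

section
/- Let (B^H_t)_{t≥0} be a fractional Brownian motion with Hurst parameter H ∈ (1/2, 3/4) on a probability space (Ω, F, P) and let σ > 0. Define U_1(N) = σ³ N^{2H−1/2} Σ_{k=0}^{N−1} ( B^H_{(k+1)/N} − B^H_{k/N} ) ( ((k+1)/N)^{2H} − (k/N)^{2H} ). Then there exists a constant C > 0, depending only on H and σ, such that for all N ≥ 2, E[U_1(N)²] ≤ C ( N^{2H−2} + N^{4H−3} ). In particular E[U_1(N)²] → 0 as N → ∞ since H < 3/4. -/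
open MeasureTheory ProbabilityTheory Filter Topology NNReal

/-
Write `X_k` for the increments of `B` over the grid `k/N` and `c_k = ((k+1)/N)^{2H} - (k/N)^{2H}`.
For `2H ≥ 1` the function `|x|^{2H}` is convex, which makes all covariances `E[X_j X_k]`
nonnegative, and since `x^{2H}` has slope at most `2H` on `[0, 1]`, `0 ≤ c_k ≤ 2H/N`. Hence
`E[(∑ c_k X_k)²] ≤ (2H/N)² E[(∑ X_k)²] = (2H/N)² E[(B_1 - B_0)²] = (2H/N)²`, and so
`E[U₁(N)²] ≤ σ⁶ N^{4H-1} (2H/N)² = 4H²σ⁶ N^{4H-3}`.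
-/

lemma memLp_two_of_map_eq_gaussianReal {Ω : Type*} [MeasurableSpace Ω] {P : Measure Ω}
    {X : Ω → ℝ} {μ : ℝ} {v : ℝ≥0} (hX : P.map X = gaussianReal μ v) : MemLp X 2 P :=
  HasGaussianLaw.memLp_two ⟨hX ▸ inferInstance⟩

lemma convexOn_abs_rpow {p : ℝ} (hp : 1 ≤ p) : ConvexOn ℝ Set.univ fun x : ℝ => |x| ^ p := by
  refine ⟨convex_univ, fun x _ y _ a b ha hb hab => ?_⟩
  calc |a • x + b • y| ^ p ≤ (a • |x| + b • |y|) ^ p := by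
        refine Real.rpow_le_rpow (abs_nonneg _) ?_ (by linarith)
        simpa [smul_eq_mul, abs_mul, abs_of_nonneg ha, abs_of_nonneg hb] using
          abs_add_le (a * x) (b * y)
    _ ≤ a • |x| ^ p + b • |y| ^ p :=
        (convexOn_rpow hp).2 (abs_nonneg x) (abs_nonneg y) ha hb hab

lemma rpow_sub_rpow_le_mul_sub {p s t : ℝ} (hp : 1 ≤ p) (hs : 0 ≤ s) (hst : s ≤ t) (ht : t ≤ 1) :
    t ^ p - s ^ p ≤ p * (t - s) := by
  rcases hst.eq_or_lt with rfl | hlt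
  · simp
  have hslope := (convexOn_rpow hp).slope_le_of_hasDerivAt hs (hs.trans hst) hlt
    (Real.hasDerivAt_rpow_const (Or.inr hp))
  have ht' : t ^ (p - 1) ≤ 1 := Real.rpow_le_one (hs.trans hst) ht (by linarith)
  rw [slope_def_field, div_le_iff₀ (by linarith)] at hslope
  calc t ^ p - s ^ p ≤ p * t ^ (p - 1) * (t - s) := hslope
    _ ≤ p * 1 * (t - s) :=
        mul_le_mul_of_nonneg_right (mul_le_mul_of_nonneg_left ht' (by linarith)) (by linarith)
    _ = p * (t - s) := by ring

section SecondMoment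

variable {Ω ι : Type*} [MeasurableSpace Ω] {P : Measure Ω} {s : Finset ι} {X : ι → Ω → ℝ}

lemma integral_sq_sum_mul (a : ι → ℝ) (hX : ∀ i ∈ s, MemLp (X i) 2 P) :
    ∫ ω, (∑ i ∈ s, X i ω * a i) ^ 2 ∂P =
      ∑ i ∈ s, ∑ j ∈ s, a i * a j * ∫ ω, X i ω * X j ω ∂P := by
  have hint : ∀ i ∈ s, ∀ j ∈ s, Integrable (fun ω => a i * a j * (X i ω * X j ω)) P :=
    fun i hi j hj => ((hX i hi).integrable_mul (hX j hj)).const_mul _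
  have hexpand : (fun ω => (∑ i ∈ s, X i ω * a i) ^ 2) =
      fun ω => ∑ i ∈ s, ∑ j ∈ s, a i * a j * (X i ω * X j ω) := by
    funext ω
    rw [sq, Finset.sum_mul_sum]
    refine Finset.sum_congr rfl fun i _ => Finset.sum_congr rfl fun j _ => ?_
    ring
  rw [hexpand, integral_finsetSum _ fun i hi => integrable_finsetSum _ (hint i hi)]
  refine Finset.sum_congr rfl fun i hi => ?_
  rw [integral_finsetSum _ (hint i hi)]
  exact Finset.sum_congr rfl fun j _ => integral_const_mul _ _

lemma integral_sq_sum_mul_le (hX : ∀ i ∈ s, MemLp (X i) 2 P)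
    (hcorr : ∀ i ∈ s, ∀ j ∈ s, 0 ≤ ∫ ω, X i ω * X j ω ∂P) {a : ι → ℝ} {m : ℝ}
    (ha₀ : ∀ i ∈ s, 0 ≤ a i) (ham : ∀ i ∈ s, a i ≤ m) :
    ∫ ω, (∑ i ∈ s, X i ω * a i) ^ 2 ∂P ≤ m ^ 2 * ∫ ω, (∑ i ∈ s, X i ω) ^ 2 ∂P := by
  have hones := integral_sq_sum_mul (fun _ => (1 : ℝ)) hX
  simp only [mul_one, one_mul] at hones
  rw [integral_sq_sum_mul a hX, hones, Finset.mul_sum]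
  refine Finset.sum_le_sum fun i hi => ?_
  rw [Finset.mul_sum]
  refine Finset.sum_le_sum fun j hj => mul_le_mul_of_nonneg_right ?_ (hcorr i hi j hj)
  rw [sq]
  exact mul_le_mul (ham i hi) (ham j hj) (ha₀ j hj) ((ha₀ i hi).trans (ham i hi))

end SecondMoment

section Increments

variable {Ω : Type*} [MeasurableSpace Ω] {P : Measure Ω} {B : ℝ → Ω → ℝ} {p : ℝ}

lemma integral_increment_mul_increment (hB : ∀ t, 0 ≤ t → MemLp (B t) 2 P)
    (hCov : ∀ s t : ℝ, 0 ≤ s → 0 ≤ t →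
      ∫ ω, B s ω * B t ω ∂P = (1/2) * (s ^ p + t ^ p - |t - s| ^ p))
    {a b c d : ℝ} (ha : 0 ≤ a) (hb : 0 ≤ b) (hc : 0 ≤ c) (hd : 0 ≤ d) :
    ∫ ω, (B b ω - B a ω) * (B d ω - B c ω) ∂P =
      (1/2) * (|d - a| ^ p + |c - b| ^ p - |c - a| ^ p - |d - b| ^ p) := by
  have hint : ∀ s t, 0 ≤ s → 0 ≤ t → Integrable (fun ω => B s ω * B t ω) P :=
    fun s t hs ht => (hB s hs).integrable_mul (hB t ht)
  have hexpand : (fun ω => (B b ω - B a ω) * (B d ω - B c ω)) =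
      fun ω => (B b ω * B d ω - B b ω * B c ω) - (B a ω * B d ω - B a ω * B c ω) := by
    funext ω
    ring
  have hb' : Integrable (fun ω => B b ω * B d ω - B b ω * B c ω) P :=
    (hint b d hb hd).sub (hint b c hb hc)
  have ha' : Integrable (fun ω => B a ω * B d ω - B a ω * B c ω) P :=
    (hint a d ha hd).sub (hint a c ha hc)
  rw [hexpand, integral_sub hb' ha',
    integral_sub (hint b d hb hd) (hint b c hb hc), integral_sub (hint a d ha hd) (hint a c ha hc),
    hCov b d hb hd, hCov b c hb hc, hCov a d ha hd, hCov a c ha hc]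
  ring

lemma integral_increment_sq (hp : 0 < p) (hB : ∀ t, 0 ≤ t → MemLp (B t) 2 P)
    (hCov : ∀ s t : ℝ, 0 ≤ s → 0 ≤ t →
      ∫ ω, B s ω * B t ω ∂P = (1/2) * (s ^ p + t ^ p - |t - s| ^ p))
    {s t : ℝ} (hs : 0 ≤ s) (ht : 0 ≤ t) :
    ∫ ω, (B t ω - B s ω) ^ 2 ∂P = |t - s| ^ p := by
  simp_rw [sq]
  rw [integral_increment_mul_increment hB hCov hs ht hs ht, abs_sub_comm s t]
  simp only [one_div, sub_self, abs_zero, Real.zero_rpow hp.ne', sub_zero]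
  ring

lemma integral_increment_mul_increment_nonneg (hp : 1 ≤ p) (hB : ∀ t, 0 ≤ t → MemLp (B t) 2 P)
    (hCov : ∀ s t : ℝ, 0 ≤ s → 0 ≤ t →
      ∫ ω, B s ω * B t ω ∂P = (1/2) * (s ^ p + t ^ p - |t - s| ^ p))
    {a b c d : ℝ} (ha : 0 ≤ a) (hb : 0 ≤ b) (hc : 0 ≤ c) (hd : 0 ≤ d) (hlen : b - a = d - c) :
    0 ≤ ∫ ω, (B b ω - B a ω) * (B d ω - B c ω) ∂P := by
  rw [integral_increment_mul_increment hB hCov ha hb hc hd]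
  -- `c - a = d - b` is the midpoint of `d - a` and `c - b`
  have hmid := (convexOn_abs_rpow hp).2 (Set.mem_univ (d - a)) (Set.mem_univ (c - b))
    (by norm_num : (0 : ℝ) ≤ 1/2) (by norm_num : (0 : ℝ) ≤ 1/2) (by norm_num)
  have hca : (1/2 : ℝ) • (d - a) + (1/2 : ℝ) • (c - b) = c - a := by
    simp only [smul_eq_mul]
    linarith
  rw [hca] at hmid
  simp only [smul_eq_mul] at hmid
  rw [show d - b = c - a by linarith]
  linarith

lemma integral_sq_sum_increment_mul_rpow_sub_le (hp : 1 ≤ p)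
    (hB : ∀ t, 0 ≤ t → MemLp (B t) 2 P)
    (hCov : ∀ s t : ℝ, 0 ≤ s → 0 ≤ t →
      ∫ ω, B s ω * B t ω ∂P = (1/2) * (s ^ p + t ^ p - |t - s| ^ p))
    {N : ℕ} (hN : 0 < N) :
    ∫ ω, (∑ k ∈ Finset.range N, (B (((k : ℝ) + 1) / N) ω - B ((k : ℝ) / N) ω) *
        ((((k : ℝ) + 1) / N) ^ p - ((k : ℝ) / N) ^ p)) ^ 2 ∂P ≤ (p / N) ^ 2 := by
  have hN₀ : (0 : ℝ) < N := by exact_mod_cast hN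
  have hgrid : ∀ k : ℕ, 0 ≤ (k : ℝ) / N ∧ 0 ≤ ((k : ℝ) + 1) / N :=
    fun k => ⟨by positivity, by positivity⟩
  have hstep : ∀ k : ℕ, (k : ℝ) / N ≤ ((k : ℝ) + 1) / N :=
    fun k => div_le_div_of_nonneg_right (by linarith) hN₀.le
  have htelescope : ∀ ω, ∑ k ∈ Finset.range N, (B (((k : ℝ) + 1) / N) ω - B ((k : ℝ) / N) ω) =
      B 1 ω - B 0 ω := by
    intro ω
    have h := Finset.sum_range_sub (fun k : ℕ => B ((k : ℝ) / N) ω) N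
    push_cast at h
    rwa [div_self hN₀.ne', zero_div] at h
  calc _ ≤ (p / N) ^ 2 *
        ∫ ω, (∑ k ∈ Finset.range N, (B (((k : ℝ) + 1) / N) ω - B ((k : ℝ) / N) ω)) ^ 2 ∂P := by
        refine integral_sq_sum_mul_le
          (fun k _ => (hB _ (hgrid k).2).sub (hB _ (hgrid k).1))
          (fun j _ k _ => integral_increment_mul_increment_nonneg hp hB hCov
            (hgrid j).1 (hgrid j).2 (hgrid k).1 (hgrid k).2 (by ring))
          (fun k _ => sub_nonneg.2 (Real.rpow_le_rpow (hgrid k).1 (hstep k) (by linarith)))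
          (fun k hk => ?_)
        have hk : ((k : ℝ) + 1) / N ≤ 1 := by
          rw [div_le_one hN₀]
          exact_mod_cast Finset.mem_range.1 hk
        calc _ ≤ p * (((k : ℝ) + 1) / N - (k : ℝ) / N) :=
              rpow_sub_rpow_le_mul_sub hp (hgrid k).1 (hstep k) hk
          _ = p / N := by ring
    _ = (p / N) ^ 2 := by
        simp_rw [htelescope]
        rw [integral_increment_sq (by linarith) hB hCov le_rfl zero_le_one]
        simp

end Increments

lemma tendsto_natCast_rpow_atTop_zero {q : ℝ} (hq : q < 0) :
    Tendsto (fun N : ℕ => (N : ℝ) ^ q) atTop (𝓝 0) := by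
  simpa [Function.comp_def] using
    (tendsto_rpow_neg_atTop (neg_pos.2 hq)).comp tendsto_natCast_atTop_atTop

theorem cross_term_L2_bound_general
    {Ω : Type*} [MeasurableSpace Ω] (P : Measure Ω)
    (H : ℝ) (hH : H ∈ Set.Ioo (1/2 : ℝ) (3/4))
    (B : ℝ → Ω → ℝ)
    (hGauss : ∀ (n : ℕ) (a : Fin n → ℝ) (t : Fin n → ℝ), (∀ i, 0 ≤ t i) →
      ∃ v : ℝ≥0, P.map (fun ω => ∑ i, a i * B (t i) ω) = gaussianReal 0 v)
    (hCov : ∀ s t : ℝ, 0 ≤ s → 0 ≤ t →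
      ∫ ω, B s ω * B t ω ∂P = (1/2) * (s ^ (2*H) + t ^ (2*H) - |t - s| ^ (2*H)))
    (σ : ℝ)
    (U₁ : ℕ → Ω → ℝ)
    (hU₁ : ∀ (N : ℕ) (ω : Ω), U₁ N ω = σ^3 * (N : ℝ) ^ (2*H - 1/2) *
      ∑ k ∈ Finset.range N,
        (B (((k : ℝ) + 1)/N) ω - B ((k : ℝ)/N) ω) *
          ((((k : ℝ) + 1)/N) ^ (2*H) - ((k : ℝ)/N) ^ (2*H))) :
    (∃ C : ℝ, 0 < C ∧ ∀ N : ℕ, 2 ≤ N →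
      ∫ ω, (U₁ N ω)^2 ∂P ≤ C * ((N : ℝ) ^ (2*H - 2) + (N : ℝ) ^ (4*H - 3))) ∧
    Tendsto (fun N : ℕ => ∫ ω, (U₁ N ω)^2 ∂P) atTop (𝓝 0) := by
  obtain ⟨hH₁, hH₂⟩ := hH
  have hB : ∀ t, 0 ≤ t → MemLp (B t) 2 P := fun t ht => by
    obtain ⟨v, hv⟩ := hGauss 1 (fun _ => 1) (fun _ => t) (fun _ => ht)
    exact memLp_two_of_map_eq_gaussianReal (by simpa using hv)
  have hbound : ∀ N : ℕ, 0 < N →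
      ∫ ω, (U₁ N ω) ^ 2 ∂P ≤ 4 * H ^ 2 * σ ^ 6 * (N : ℝ) ^ (4*H - 3) := by
    intro N hN
    have hN₀ : (0 : ℝ) < N := by exact_mod_cast hN
    have hscale : ((N : ℝ) ^ (2*H - 1/2)) ^ 2 = (N : ℝ) ^ (4*H - 3) * (N : ℝ) ^ 2 := by
      rw [sq, ← Real.rpow_two, ← Real.rpow_add hN₀, ← Real.rpow_add hN₀]
      ring_nf
    simp_rw [hU₁, mul_pow]
    rw [integral_const_mul]
    calc _ ≤ (σ ^ 3) ^ 2 * ((N : ℝ) ^ (2*H - 1/2)) ^ 2 * (2 * H / N) ^ 2 :=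
          mul_le_mul_of_nonneg_left
            (integral_sq_sum_increment_mul_rpow_sub_le (by linarith) hB hCov hN) (by positivity)
      _ = 4 * H ^ 2 * σ ^ 6 * (N : ℝ) ^ (4*H - 3) := by
          rw [hscale]
          field_simp
          ring
  refine ⟨⟨4 * H ^ 2 * σ ^ 6 + 1, by positivity, fun N hN => (hbound N (by omega)).trans ?_⟩, ?_⟩
  · have h₁ : 0 ≤ (N : ℝ) ^ (2*H - 2) := Real.rpow_nonneg N.cast_nonneg _
    have h₂ : 0 ≤ (N : ℝ) ^ (4*H - 3) := Real.rpow_nonneg N.cast_nonneg _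
    nlinarith [mul_nonneg (by positivity : (0 : ℝ) ≤ 4 * H ^ 2 * σ ^ 6 + 1) h₁]
  · refine squeeze_zero' (Eventually.of_forall fun N => integral_nonneg fun ω => sq_nonneg _)
      ((eventually_gt_atTop 0).mono hbound) ?_
    simpa using (tendsto_natCast_rpow_atTop_zero (by linarith : 4*H - 3 < 0)).const_mul
      (4 * H ^ 2 * σ ^ 6)

/-- Quantitative L² bound for the drift-correction cross term:
E[U₁(N)²] ≤ C (N^{2H−2} + N^{4H−3}) for N ≥ 2, and in particular E[U₁(N)²] → 0. -/
theorem cross_term_L2_bound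
    {Ω : Type*} [MeasurableSpace Ω] (P : Measure Ω) [IsProbabilityMeasure P]
    (H : ℝ) (hH : H ∈ Set.Ioo (1/2 : ℝ) (3/4))
    (B : ℝ → Ω → ℝ)
    (hGauss : ∀ (n : ℕ) (a : Fin n → ℝ) (t : Fin n → ℝ), (∀ i, 0 ≤ t i) →
      ∃ v : ℝ≥0, P.map (fun ω => ∑ i, a i * B (t i) ω) = gaussianReal 0 v)
    (hCov : ∀ s t : ℝ, 0 ≤ s → 0 ≤ t →
      ∫ ω, B s ω * B t ω ∂P = (1/2) * (s ^ (2*H) + t ^ (2*H) - |t - s| ^ (2*H)))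
    (σ : ℝ) (hσ : 0 < σ)
    (U₁ : ℕ → Ω → ℝ)
    (hU₁ : ∀ (N : ℕ) (ω : Ω), U₁ N ω = σ^3 * (N : ℝ) ^ (2*H - 1/2) *
      ∑ k ∈ Finset.range N,
        (B (((k : ℝ) + 1)/N) ω - B ((k : ℝ)/N) ω) *
          ((((k : ℝ) + 1)/N) ^ (2*H) - ((k : ℝ)/N) ^ (2*H))) :
    (∃ C : ℝ, 0 < C ∧ ∀ N : ℕ, 2 ≤ N →
      ∫ ω, (U₁ N ω)^2 ∂P ≤ C * ((N : ℝ) ^ (2*H - 2) + (N : ℝ) ^ (4*H - 3))) ∧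
    Tendsto (fun N : ℕ => ∫ ω, (U₁ N ω)^2 ∂P) atTop (𝓝 0) :=
  cross_term_L2_bound_general P H hH B hGauss hCov σ U₁ hU₁
end

section
/- Let H ∈ (1/2, 3/4), let Σ > 0 and let σ : [0,1] → ℝ be measurable with 0 ≤ σ(t) ≤ Σ. For N ≥ 1 and 0 ≤ k, j ≤ N−1 define c^N_{kj} = H(2H−1) ∫_{k/N}^{(k+1)/N} ∫_{j/N}^{(j+1)/N} σ(s) σ(t) |s − t|^{2H−2} dt ds, and set S_N = 2 N^{4H−1} Σ_{k=0}^{N−1} Σ_{j=0}^{N−1} (c^N_{kj})². Then sup_{N ≥ 1} S_N < ∞. -/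
/-! Cut `[0, 1]` into cells of length `1 / N`. For cells at index distance `d`, the double
integral of `|s - t| ^ (2H - 2)` is at most `cellBound (2H - 2) d / N ^ (2H)`: adjacent cells are
covered by a window of radius `2 / N` around `s`, and distant ones are at distance at least
`(d - 1) / N`. Since `cellBound (2H - 2) d ^ 2 ~ d ^ (4H - 4)` is summable exactly when
`H < 3/4`, summing over `k, j` gives `∑ (c^N_{kj})² ≲ N · N^{-4H}`, cancelling the
factor `N^{4H-1}`. -/

open MeasureTheory Set

lemma intervalIntegrable_abs_rpow {r : ℝ} (hr : -1 < r) (a b : ℝ) :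
    IntervalIntegrable (fun x : ℝ => |x| ^ r) volume a b := by
  have from_zero_of_nonneg {d : ℝ} (hd : 0 ≤ d) :
      IntervalIntegrable (fun x : ℝ => |x| ^ r) volume 0 d := by
    refine (intervalIntegral.intervalIntegrable_rpow' hr).congr fun x hx => ?_
    rw [uIoc_of_le hd] at hx
    simp [abs_of_pos hx.1]
  have from_zero (d : ℝ) : IntervalIntegrable (fun x : ℝ => |x| ^ r) volume 0 d := by
    rcases le_total 0 d with hd | hd
    · exact from_zero_of_nonneg hd
    · simpa using (IntervalIntegrable.iff_comp_neg (by simp)).mp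
        (from_zero_of_nonneg (neg_nonneg.2 hd))
  exact (from_zero a).symm.trans (from_zero b)

lemma integral_abs_sub_rpow_symm {r : ℝ} (hr : -1 < r) (s : ℝ) {d : ℝ} (hd : 0 ≤ d) :
    ∫ t in (s - d)..(s + d), |s - t| ^ r = 2 * d ^ (r + 1) / (r + 1) := by
  have half : ∫ x in (0 : ℝ)..d, |x| ^ r = d ^ (r + 1) / (r + 1) := by
    rw [intervalIntegral.integral_congr (g := fun x => x ^ r), integral_rpow (Or.inl hr),
      Real.zero_rpow (by linarith), sub_zero]
    intro x hx
    rw [uIcc_of_le hd] at hx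
    simp [abs_of_nonneg hx.1]
  have reflect : ∫ x in (-d)..0, |x| ^ r = ∫ x in (0 : ℝ)..d, |x| ^ r := by
    simpa using (intervalIntegral.integral_comp_neg (a := 0) (b := d) (fun x => |x| ^ r)).symm
  rw [intervalIntegral.integral_comp_sub_left (fun x => |x| ^ r), show s - (s + d) = -d by ring,
    show s - (s - d) = d by ring, ← intervalIntegral.integral_add_adjacent_intervals
      (intervalIntegrable_abs_rpow hr _ _) (intervalIntegrable_abs_rpow hr _ _), reflect, half]
  ring

lemma norm_integral_le_of_norm_le_abs_sub_rpow {r A s d u v : ℝ} {f : ℝ → ℝ} (hr : -1 < r)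
    (hA : 0 ≤ A) (hd : 0 ≤ d) (huv : u ≤ v) (hsu : s - d ≤ u) (hvs : v ≤ s + d)
    (hf : ∀ t ∈ Icc u v, ‖f t‖ ≤ A * |s - t| ^ r) :
    ‖∫ t in u..v, f t‖ ≤ A * (2 * d ^ (r + 1) / (r + 1)) := by
  have hint (a b : ℝ) : IntervalIntegrable (fun t => A * |s - t| ^ r) volume a b := by
    simpa [abs_sub_comm] using
      ((intervalIntegrable_abs_rpow hr (s - a) (s - b)).comp_sub_left s).const_mul A
  calc ‖∫ t in u..v, f t‖ ≤ ∫ t in u..v, A * |s - t| ^ r :=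
        intervalIntegral.norm_integral_le_of_norm_le huv
          (ae_of_all _ fun t ht => hf t (Ioc_subset_Icc_self ht)) (hint u v)
    _ ≤ ∫ t in (s - d)..(s + d), A * |s - t| ^ r :=
        intervalIntegral.integral_mono_interval hsu huv hvs
          (ae_of_all _ fun t => by positivity) (hint _ _)
    _ = A * (2 * d ^ (r + 1) / (r + 1)) := by
        rw [intervalIntegral.integral_const_mul, integral_abs_sub_rpow_symm hr s hd]

lemma natCast_dist_eq_abs_sub (k j : ℕ) : (Nat.dist k j : ℝ) = |(k : ℝ) - j| := by
  rcases le_total k j with h | h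
  · rw [Nat.dist_eq_sub_of_le h, Nat.cast_sub h, abs_sub_comm, abs_of_nonneg (by simpa)]
  · rw [Nat.dist_comm, Nat.dist_eq_sub_of_le h, Nat.cast_sub h, abs_of_nonneg (by simpa)]

lemma abs_sub_bounds_of_mem_cells {N : ℝ} (hN : 0 < N) {a b s t : ℝ}
    (hs : s ∈ Icc (a / N) ((a + 1) / N)) (ht : t ∈ Icc (b / N) ((b + 1) / N)) :
    (|a - b| - 1) / N ≤ |s - t| ∧ |s - t| ≤ (|a - b| + 1) / N := by
  simp only [mem_Icc, div_le_iff₀ hN, le_div_iff₀ hN] at hs ht ⊢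
  rw [← abs_of_pos hN, ← abs_mul, sub_mul]
  constructor <;> cases abs_cases (a - b) <;> cases abs_cases (s * N - t * N) <;> linarith

lemma Icc_div_subset_unitInterval {N k : ℕ} (hk : k < N) :
    Icc ((k : ℝ) / N) ((k + 1) / N) ⊆ Icc 0 1 := by
  have hN : (0 : ℝ) < N := by exact_mod_cast (k.zero_le.trans_lt hk)
  have hk' : (k : ℝ) + 1 ≤ N := by exact_mod_cast hk
  exact Icc_subset_Icc (by positivity) ((div_le_one hN).2 hk')

lemma abs_mul_mul_le_sq_mul {a b w Λ : ℝ} (ha : 0 ≤ a ∧ a ≤ Λ) (hb : 0 ≤ b ∧ b ≤ Λ)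
    (hw : 0 ≤ w) : |a * b * w| ≤ Λ ^ 2 * w := by
  obtain ⟨ha0, haΛ⟩ := ha
  obtain ⟨hb0, hbΛ⟩ := hb
  rw [abs_of_nonneg (by positivity), sq]
  gcongr
  linarith

noncomputable def cellBound (r : ℝ) (d : ℕ) : ℝ :=
  if d ≤ 1 then 2 ^ (r + 2) / (r + 1) else ((d : ℝ) - 1) ^ r

lemma abs_integral_cell_le {r A : ℝ} (hr : -1 < r) (hr0 : r ≤ 0) (hA : 0 ≤ A) {N k j : ℕ}
    (hN : 0 < N) {s : ℝ} {f : ℝ → ℝ} (hs : s ∈ Icc ((k : ℝ) / N) ((k + 1) / N))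
    (hf : ∀ t ∈ Icc ((j : ℝ) / N) ((j + 1) / N), |f t| ≤ A * |s - t| ^ r) :
    |∫ t in ((j : ℝ) / N)..((j + 1) / N), f t| ≤
      A * cellBound r (Nat.dist k j) / (N : ℝ) ^ (r + 1) := by
  have hN' : (0 : ℝ) < N := by exact_mod_cast hN
  have hj : (j : ℝ) / N ≤ (j + 1) / N := by gcongr; linarith
  have hdist (t : ℝ) (ht : t ∈ Icc ((j : ℝ) / N) ((j + 1) / N)) :=
    natCast_dist_eq_abs_sub k j ▸ abs_sub_bounds_of_mem_cells hN' hs ht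
  unfold cellBound
  split_ifs with hd
  · have hd' : (Nat.dist k j : ℝ) ≤ 1 := by exact_mod_cast hd
    have hwidth : ((Nat.dist k j : ℝ) + 1) / N ≤ 2 / N := by gcongr; linarith
    have hleft := (abs_le.1 ((hdist _ (left_mem_Icc.2 hj)).2)).2
    have hright := (abs_le.1 ((hdist _ (right_mem_Icc.2 hj)).2)).1
    have window := norm_integral_le_of_norm_le_abs_sub_rpow hr hA (d := 2 / N) (by positivity)
      hj ?_ ?_ hf
    · have h2 : (2 : ℝ) ^ (r + 2) = 2 * 2 ^ (r + 1) := by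
        rw [show r + 2 = r + 1 + 1 by ring, Real.rpow_add_one two_ne_zero]; ring
      rw [← Real.norm_eq_abs]
      refine window.trans_eq ?_
      rw [Real.div_rpow zero_le_two hN'.le, h2]
      ring
    · linarith
    · linarith
  · have hd' : (2 : ℝ) ≤ Nat.dist k j := by exact_mod_cast not_le.1 hd
    have hgap : 0 < ((Nat.dist k j : ℝ) - 1) / N := div_pos (by linarith) hN'
    have hpt (t : ℝ) (ht : t ∈ uIoc ((j : ℝ) / N) ((j + 1) / N)) :
        ‖f t‖ ≤ A * (((Nat.dist k j : ℝ) - 1) / N) ^ r := by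
      have ht' : t ∈ Icc ((j : ℝ) / N) ((j + 1) / N) := uIcc_of_le hj ▸ uIoc_subset_uIcc ht
      calc ‖f t‖ ≤ A * |s - t| ^ r := hf t ht'
        _ ≤ A * (((Nat.dist k j : ℝ) - 1) / N) ^ r :=
          mul_le_mul_of_nonneg_left (Real.rpow_le_rpow_of_nonpos hgap (hdist t ht').1 hr0) hA
    rw [← Real.norm_eq_abs]
    refine (intervalIntegral.norm_integral_le_of_norm_le_const hpt).trans_eq ?_
    rw [show ((j : ℝ) + 1) / N - j / N = 1 / N by ring, abs_of_pos (by positivity),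
      Real.div_rpow (by linarith) hN'.le, Real.rpow_add_one hN'.ne']
    ring

lemma abs_integral_cell_cell_le {r A : ℝ} (hr : -1 < r) (hr0 : r ≤ 0) (hA : 0 ≤ A)
    {f : ℝ → ℝ → ℝ} (hf : ∀ s ∈ Icc (0 : ℝ) 1, ∀ t ∈ Icc (0 : ℝ) 1, |f s t| ≤ A * |s - t| ^ r)
    {N k j : ℕ} (hk : k < N) (hj : j < N) :
    |∫ s in ((k : ℝ) / N)..((k + 1) / N), ∫ t in ((j : ℝ) / N)..((j + 1) / N), f s t| ≤
      A * cellBound r (Nat.dist k j) / (N : ℝ) ^ (r + 2) := by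
  have hN : 0 < N := k.zero_le.trans_lt hk
  have hN' : (0 : ℝ) < N := by exact_mod_cast hN
  have hk' : (k : ℝ) / N ≤ (k + 1) / N := by gcongr; linarith
  have hinner (s : ℝ) (hs : s ∈ uIoc ((k : ℝ) / N) ((k + 1) / N)) :
      ‖∫ t in ((j : ℝ) / N)..((j + 1) / N), f s t‖ ≤
        A * cellBound r (Nat.dist k j) / (N : ℝ) ^ (r + 1) := by
    have hs' : s ∈ Icc ((k : ℝ) / N) ((k + 1) / N) := uIcc_of_le hk' ▸ uIoc_subset_uIcc hs
    exact abs_integral_cell_le hr hr0 hA hN hs' fun t ht =>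
      hf s (Icc_div_subset_unitInterval hk hs') t (Icc_div_subset_unitInterval hj ht)
  rw [← Real.norm_eq_abs]
  refine (intervalIntegral.norm_integral_le_of_norm_le_const hinner).trans_eq ?_
  rw [show ((k : ℝ) + 1) / N - k / N = 1 / N by ring, abs_of_pos (by positivity),
    show r + 2 = r + 1 + 1 by ring, Real.rpow_add_one hN'.ne' (r + 1)]
  ring

lemma summable_cellBound_sq {r : ℝ} (hr : r < -1 / 2) :
    Summable fun d => cellBound r d ^ 2 := by
  rw [← summable_nat_add_iff 2]
  refine ((summable_nat_add_iff 1).2 (Real.summable_nat_rpow.2 (by linarith : 2 * r < -1))).congr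
    fun n => ?_
  have hn : (0 : ℝ) ≤ n + 1 := by positivity
  simp only [cellBound, if_neg (by omega : ¬ n + 2 ≤ 1)]
  push_cast
  rw [show (n : ℝ) + 2 - 1 = n + 1 by ring, ← Real.rpow_mul_natCast hn]
  norm_num [mul_comm]

lemma sum_range_comp_dist_le_two_mul_tsum {f : ℕ → ℝ} (hf : ∀ d, 0 ≤ f d) (hsum : Summable f)
    (N k : ℕ) : ∑ j ∈ Finset.range N, f (Nat.dist k j) ≤ 2 * ∑' d, f d := by
  have le_tsum (s : Finset ℕ) (hinj : InjOn (Nat.dist k) s) :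
      ∑ j ∈ s, f (Nat.dist k j) ≤ ∑' d, f d := by
    rw [← Finset.sum_image hinj]
    exact hsum.sum_le_tsum _ fun d _ => hf d
  rw [← Finset.sum_filter_add_sum_filter_not _ (· ≤ k)]
  have below := le_tsum ((Finset.range N).filter (· ≤ k)) fun x hx y hy h => by
    rw [Finset.mem_coe, Finset.mem_filter] at hx hy
    simp only [Nat.dist] at h
    omega
  have above := le_tsum ((Finset.range N).filter (¬ · ≤ k)) fun x hx y hy h => by
    rw [Finset.mem_coe, Finset.mem_filter] at hx hy
    simp only [Nat.dist] at h
    omega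
  linarith

lemma sum_range_sum_range_sq_le {x : ℕ → ℕ → ℝ} {b : ℕ → ℝ} {B : ℝ} {N : ℕ}
    (hx : ∀ k < N, ∀ j < N, |x k j| ≤ B * b (Nat.dist k j)) (hb : Summable fun d => b d ^ 2) :
    ∑ k ∈ Finset.range N, ∑ j ∈ Finset.range N, x k j ^ 2 ≤
      N * (B ^ 2 * (2 * ∑' d, b d ^ 2)) := by
  calc ∑ k ∈ Finset.range N, ∑ j ∈ Finset.range N, x k j ^ 2
      ≤ ∑ k ∈ Finset.range N, B ^ 2 * ∑ j ∈ Finset.range N, b (Nat.dist k j) ^ 2 := by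
        gcongr with k hk
        rw [Finset.mul_sum]
        gcongr with j hj
        rw [← mul_pow, ← sq_abs]
        exact pow_le_pow_left₀ (abs_nonneg _)
          (hx k (Finset.mem_range.1 hk) j (Finset.mem_range.1 hj)) 2
    _ ≤ ∑ _k ∈ Finset.range N, B ^ 2 * (2 * ∑' d, b d ^ 2) := by
        gcongr with k
        exact sum_range_comp_dist_le_two_mul_tsum (fun d => sq_nonneg _) hb N k
    _ = N * (B ^ 2 * (2 * ∑' d, b d ^ 2)) := by
        rw [Finset.sum_const, Finset.card_range, nsmul_eq_mul]

theorem variance_sequence_bounded_general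
    (H : ℝ) (hH : H ∈ Set.Ioo (1/2 : ℝ) (3/4))
    (Λ : ℝ)
    (σ : ℝ → ℝ)
    (hσbd : ∀ t ∈ Set.Icc (0:ℝ) 1, 0 ≤ σ t ∧ σ t ≤ Λ)
    (c : ℕ → ℕ → ℕ → ℝ)
    (hc : ∀ N k j : ℕ, c N k j = H * (2*H - 1) *
      ∫ s in ((k : ℝ)/N)..(((k : ℝ) + 1)/N),
        ∫ t in ((j : ℝ)/N)..(((j : ℝ) + 1)/N), σ s * σ t * |s - t| ^ (2*H - 2))
    (S : ℕ → ℝ)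
    (hS : ∀ N : ℕ, S N = 2 * (N : ℝ) ^ (4*H - 1) *
      ∑ k ∈ Finset.range N, ∑ j ∈ Finset.range N, (c N k j)^2) :
    ∃ C : ℝ, ∀ N : ℕ, 1 ≤ N → S N ≤ C := by
  obtain ⟨hH1, hH2⟩ := hH
  have hH0 : 0 ≤ H * (2 * H - 1) := by nlinarith
  have hkernel (s : ℝ) (hs : s ∈ Icc 0 1) (t : ℝ) (ht : t ∈ Icc 0 1) :=
    abs_mul_mul_le_sq_mul (hσbd s hs) (hσbd t ht)
      (Real.rpow_nonneg (abs_nonneg (s - t)) (2 * H - 2))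
  set K := H * (2 * H - 1) * Λ ^ 2
  set T := ∑' d, cellBound (2 * H - 2) d ^ 2
  refine ⟨4 * K ^ 2 * T, fun N hN => ?_⟩
  have hN' : (0 : ℝ) < N := by exact_mod_cast hN
  have hc_le (k) (hk : k < N) (j) (hj : j < N) :
      |c N k j| ≤ K / (N : ℝ) ^ (2 * H) * cellBound (2 * H - 2) (Nat.dist k j) := by
    have hcell := abs_integral_cell_cell_le (by linarith) (by linarith) (sq_nonneg Λ) hkernel hk hj
    rw [show 2 * H - 2 + 2 = 2 * H by ring] at hcell
    rw [hc, abs_mul, abs_of_nonneg hH0]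
    refine (mul_le_mul_of_nonneg_left hcell hH0).trans_eq ?_
    ring
  have hscale : (N : ℝ) ^ (4 * H - 1) * N / ((N : ℝ) ^ (2 * H)) ^ 2 = 1 := by
    rw [← Real.rpow_add_one hN'.ne', sub_add_cancel, ← Real.rpow_mul_natCast hN'.le,
      show 2 * H * ((2 : ℕ) : ℝ) = 4 * H by push_cast; ring]
    exact div_self (Real.rpow_pos_of_pos hN' _).ne'
  calc S N = 2 * (N : ℝ) ^ (4 * H - 1) *
        ∑ k ∈ Finset.range N, ∑ j ∈ Finset.range N, c N k j ^ 2 := hS N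
    _ ≤ 2 * (N : ℝ) ^ (4 * H - 1) * (N * ((K / (N : ℝ) ^ (2 * H)) ^ 2 * (2 * T))) := by
        gcongr
        exact sum_range_sum_range_sq_le hc_le (summable_cellBound_sq (by linarith))
    _ = 4 * K ^ 2 * T * ((N : ℝ) ^ (4 * H - 1) * N / ((N : ℝ) ^ (2 * H)) ^ 2) := by ring
    _ = 4 * K ^ 2 * T := by rw [hscale, mul_one]

/-- Uniform boundedness of S_N = 2 N^{4H−1} Σ_{k,j} (c^N_{kj})²
for H ∈ (1/2, 3/4): sup_{N ≥ 1} S_N < ∞. -/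
theorem variance_sequence_bounded
    (H : ℝ) (hH : H ∈ Set.Ioo (1/2 : ℝ) (3/4))
    (Λ : ℝ) (hΛ : 0 < Λ)
    (σ : ℝ → ℝ) (hσmeas : Measurable σ)
    (hσbd : ∀ t ∈ Set.Icc (0:ℝ) 1, 0 ≤ σ t ∧ σ t ≤ Λ)
    (c : ℕ → ℕ → ℕ → ℝ)
    (hc : ∀ N k j : ℕ, c N k j = H * (2*H - 1) *
      ∫ s in ((k : ℝ)/N)..(((k : ℝ) + 1)/N),
        ∫ t in ((j : ℝ)/N)..(((j : ℝ) + 1)/N), σ s * σ t * |s - t| ^ (2*H - 2))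
    (S : ℕ → ℝ)
    (hS : ∀ N : ℕ, S N = 2 * (N : ℝ) ^ (4*H - 1) *
      ∑ k ∈ Finset.range N, ∑ j ∈ Finset.range N, (c N k j)^2) :
    ∃ C : ℝ, ∀ N : ℕ, 1 ≤ N → S N ≤ C :=
  variance_sequence_bounded_general H hH Λ σ hσbd c hc S hS
end
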